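/- arXiv:2111.11275 — 5 statements merged into one kernel-verified Lean document; each statement's English description precedes it below -/
import Mathlib

section
/- Any set of pairwise commuting generalized Pauli matrices in dimension d, regarded via their coordinates as pairs (m,n) ∈ ℤ_d × ℤ_d with the commutation condition m'n − mn' ≡ 0 (mod d), has cardinality at most d. -/
/-!
The span `H` of a set on which the symplectic form `m n' - m' n` vanishes is still isotropic.
Project `H` onto the first coordinate: the image is an ideal `I = (a)`, and the kernel
`{(0, y) ∈ H}` embeds into the annihilator of `I`, since `y` pairs to zero with every `(x, b) ∈ H`.
As `I` and `Ann I` are the image and kernel of multiplication by `a`,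
`|H| = |I| · |ker| ≤ |I| · |Ann I| = d`.
-/

open Submodule

theorem LinearMap.card_range_mul_card_ker {R M N : Type*} [Ring R] [AddCommGroup M]
    [AddCommGroup N] [Module R M] [Module R N] (f : M →ₗ[R] N) :
    Nat.card f.range * Nat.card f.ker = Nat.card M := by
  rw [card_eq_card_quotient_mul_card f.ker, Nat.card_congr f.quotKerEquivRange.toEquiv,
    mul_comm]

theorem LinearMap.apply_eq_zero_of_mem_span {R M N P : Type*} [CommSemiring R]
    [AddCommMonoid M] [AddCommMonoid N] [AddCommMonoid P] [Module R M] [Module R N] [Module R P]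
    {B : M →ₗ[R] N →ₗ[R] P} {s : Set M} {t : Set N} (h : ∀ x ∈ s, ∀ y ∈ t, B x y = 0)
    {x : M} (hx : x ∈ span R s) {y : N} (hy : y ∈ span R t) : B x y = 0 := by
  have hs : span R s ≤ LinearMap.ker (B.flip y) := span_le.2 fun x' hx' =>
    (span_le.2 fun y' hy' => h x' hx' y' hy' : span R t ≤ LinearMap.ker (B x')) hy
  exact hs hx

instance ZMod.isPrincipalIdealRing (d : ℕ) : IsPrincipalIdealRing (ZMod d) :=
  IsPrincipalIdealRing.of_surjective (Int.castRingHom (ZMod d)) (ZMod.ringHom_surjective _)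

def symplecticForm (R : Type*) [CommRing R] : LinearMap.BilinForm R (R × R) :=
  LinearMap.mk₂ R (fun p q => p.1 * q.2 - q.1 * p.2)
    (fun _ _ _ => by simp only [Prod.fst_add, Prod.snd_add]; ring)
    (fun _ _ _ => by simp only [Prod.smul_fst, Prod.smul_snd, smul_eq_mul]; ring)
    (fun _ _ _ => by simp only [Prod.fst_add, Prod.snd_add]; ring)
    (fun _ _ _ => by simp only [Prod.smul_fst, Prod.smul_snd, smul_eq_mul]; ring)

@[simp]
theorem symplecticForm_apply {R : Type*} [CommRing R] (p q : R × R) :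
    symplecticForm R p q = p.1 * q.2 - q.1 * p.2 :=
  rfl

section PrincipalIdealRing

variable {R : Type*} [CommRing R] [IsPrincipalIdealRing R]

theorem Ideal.card_mul_card_annihilator (I : Ideal R) :
    Nat.card I * Nat.card I.annihilator = Nat.card R := by
  obtain ⟨a, rfl⟩ := IsPrincipalIdealRing.principal I
  have hker : (R ∙ a).annihilator = (LinearMap.toSpanSingleton R R a).ker := by
    ext r
    rw [mem_annihilator_span_singleton, LinearMap.mem_ker, LinearMap.toSpanSingleton_apply]
  rw [hker, LinearMap.span_singleton_eq_range, LinearMap.card_range_mul_card_ker]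

theorem Submodule.card_le_card_of_symplecticForm_eq_zero [Finite R] (H : Submodule R (R × R))
    (hH : ∀ p ∈ H, ∀ q ∈ H, symplecticForm R p q = 0) : Nat.card H ≤ Nat.card R := by
  set f := (LinearMap.fst R R R).comp H.subtype
  have hker : Nat.card f.ker ≤ Nat.card f.range.annihilator := by
    refine Nat.card_le_card_of_injective (fun k => ⟨(k : H).1.2, ?_⟩) fun k k' hkk' => ?_
    · rw [mem_annihilator]
      rintro _ ⟨p, rfl⟩
      have hk : (k : H).1.1 = 0 := k.2
      simpa [f, hk, mul_comm] using hH p p.2 k (k : H).2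
    · have hk : (k : H).1.1 = (k' : H).1.1 := k.2.trans k'.2.symm
      exact Subtype.ext (Subtype.ext (Prod.ext hk (congrArg Subtype.val hkk')))
  calc Nat.card H = Nat.card f.range * Nat.card f.ker := (f.card_range_mul_card_ker).symm
    _ ≤ Nat.card f.range * Nat.card f.range.annihilator := Nat.mul_le_mul_left _ hker
    _ = Nat.card R := Ideal.card_mul_card_annihilator f.range

end PrincipalIdealRing

/-- Any pairwise commuting set of generalized Pauli coordinates has at most `d` elements. -/
theorem card_le_of_pairwise_comm (d : ℕ) (hd : 2 ≤ d)
    (S : Finset (ZMod d × ZMod d))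
    (h : ∀ p ∈ S, ∀ q ∈ S, p.1 * q.2 - q.1 * p.2 = 0) :
    S.card ≤ d := by
  have : NeZero d := ⟨by omega⟩
  set H := span (ZMod d) (S : Set (ZMod d × ZMod d))
  have hH : ∀ p ∈ H, ∀ q ∈ H, symplecticForm (ZMod d) p q = 0 := fun p hp q hq =>
    (symplecticForm (ZMod d)).apply_eq_zero_of_mem_span h hp hq
  calc S.card = Nat.card (S : Set (ZMod d × ZMod d)) := (Nat.card_eq_finsetCard S).symm
    _ ≤ Nat.card H := Nat.card_mono (Set.toFinite _) subset_span
    _ ≤ Nat.card (ZMod d) := H.card_le_card_of_symplecticForm_eq_zero hH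
    _ = d := Nat.card_zmod d
end

section
/- Every maximally commutative subset of ℤ_d × ℤ_d (under the commutativity relation mn' − m'n ≡ 0 mod d) is a subgroup of ℤ_d × ℤ_d. -/
/-- Two pairs `(m,n)` and `(m',n')` in `ℤ_d × ℤ_d` are commutative (the corresponding
generalized Pauli matrices commute) iff `m n' − m' n ≡ 0 (mod d)`. -/
def CommPair {d : ℕ} (p q : ZMod d × ZMod d) : Prop :=
  p.1 * q.2 - q.1 * p.2 = 0

/-- A subset of `ℤ_d × ℤ_d` is maximally commutative if its elements pairwise commute
and every element commuting with all its members belongs to it. -/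
def IsMaxComm {d : ℕ} (C : Set (ZMod d × ZMod d)) : Prop :=
  (∀ p ∈ C, ∀ q ∈ C, CommPair p q) ∧ (∀ p, (∀ q ∈ C, CommPair p q) → p ∈ C)

/-! Maximality makes `C` equal to its commutant `{p | ∀ q ∈ C, CommPair p q}`, and the
commutant of any set is a subgroup because `CommPair p q` is linear in `p`. -/

namespace CommPair

variable {d : ℕ}

theorem zero_left (q : ZMod d × ZMod d) : CommPair 0 q := by
  simp [CommPair]

theorem add_left {p p' q : ZMod d × ZMod d} (h : CommPair p q) (h' : CommPair p' q) :
    CommPair (p + p') q := by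
  unfold CommPair at *
  simp only [Prod.fst_add, Prod.snd_add]
  linear_combination h + h'

theorem neg_left {p q : ZMod d × ZMod d} (h : CommPair p q) : CommPair (-p) q := by
  unfold CommPair at *
  simp only [Prod.fst_neg, Prod.snd_neg]
  linear_combination -h

end CommPair

def commutant {d : ℕ} (S : Set (ZMod d × ZMod d)) : AddSubgroup (ZMod d × ZMod d) where
  carrier := {p | ∀ q ∈ S, CommPair p q}
  zero_mem' := fun q _ => CommPair.zero_left q
  add_mem' := fun hp hp' q hq => (hp q hq).add_left (hp' q hq)
  neg_mem' := fun hp q hq => (hp q hq).neg_left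

theorem IsMaxComm.coe_commutant_eq {d : ℕ} {C : Set (ZMod d × ZMod d)} (hC : IsMaxComm C) :
    (commutant C : Set (ZMod d × ZMod d)) = C :=
  Set.Subset.antisymm (fun p hp => hC.2 p hp) fun p hp => hC.1 p hp

theorem maxComm_is_subgroup_general (d : ℕ)
    (C : Set (ZMod d × ZMod d)) (hC : IsMaxComm C) :
    ∃ H : AddSubgroup (ZMod d × ZMod d), (H : Set (ZMod d × ZMod d)) = C :=
  ⟨commutant C, hC.coe_commutant_eq⟩

/-- Every maximally commutative subset of `ℤ_d × ℤ_d` is a subgroup. -/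
theorem maxComm_is_subgroup (d : ℕ) (hd : 2 ≤ d)
    (C : Set (ZMod d × ZMod d)) (hC : IsMaxComm C) :
    ∃ H : AddSubgroup (ZMod d × ZMod d), (H : Set (ZMod d × ZMod d)) = C :=
  maxComm_is_subgroup_general d C hC
end

section
/- For d ≥ 3 and (i,j) ∈ ℤ_d × ℤ_d with i ≠ 0, the set C_{i,j} := {(x,y) ∈ ℤ_d × ℤ_d : iy − jx ≡ 0 (mod d) and x ∈ iℤ_d} has exactly d elements. -/
/-- The set `C_{i,j} = {(x,y) ∈ ℤ_d × ℤ_d : i y − j x ≡ 0 (mod d), x ∈ iℤ_d}`. -/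
def Cij {d : ℕ} (i j : ZMod d) : Set (ZMod d × ZMod d) :=
  {p | i * p.2 - j * p.1 = 0 ∧ ∃ k : ZMod d, p.1 = i * k}

/-!
The argument works over any commutative ring `R`. The first projection maps `C_{i,j}` onto
`iR`, because `(i k, j k) ∈ C_{i,j}`, and its kernel is `{0} × ann(i)`. Hence
`|C_{i,j}| = |iR| · |ann(i)|`, which is `|R|` by the first isomorphism theorem for
multiplication by `i`.
-/

theorem AddMonoidHom.card_ker_mul_card_range {G H : Type*} [AddGroup G] [AddGroup H]
    (f : G →+ H) : Nat.card f.ker * Nat.card f.range = Nat.card G := by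
  rw [← AddSubgroup.index_ker, AddSubgroup.card_mul_index]

section

variable {R : Type*} [CommRing R]

def cijSubgroup (i j : R) : AddSubgroup (R × R) where
  carrier := {p | i * p.2 - j * p.1 = 0 ∧ ∃ k, p.1 = i * k}
  zero_mem' := ⟨by simp, 0, by simp⟩
  add_mem' := by
    rintro _ _ ⟨hp, k, hk⟩ ⟨hq, l, hl⟩
    exact ⟨by simp only [Prod.fst_add, Prod.snd_add]; linear_combination hp + hq,
      k + l, by simp [hk, hl, mul_add]⟩
  neg_mem' := by
    rintro _ ⟨hp, k, hk⟩
    exact ⟨by simp only [Prod.fst_neg, Prod.snd_neg]; linear_combination -hp, -k, by simp [hk]⟩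

variable (i j : R)

def cijFst : cijSubgroup i j →+ R := (AddMonoidHom.fst R R).comp (cijSubgroup i j).subtype

theorem range_cijFst : (cijFst i j).range = (AddMonoidHom.mulLeft i).range := by
  ext x
  constructor
  · rintro ⟨⟨p, -, k, hk⟩, rfl⟩
    exact ⟨k, hk.symm⟩
  · rintro ⟨k, rfl⟩
    exact ⟨⟨(i * k, j * k), by simp only; ring, k, rfl⟩, rfl⟩

theorem mem_ker_cijFst {p : cijSubgroup i j} : p ∈ (cijFst i j).ker ↔ p.1.1 = 0 := Iff.rfl

def cijFstKerEquiv : (cijFst i j).ker ≃ (AddMonoidHom.mulLeft i).ker where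
  toFun p := ⟨p.1.1.2, by
    obtain ⟨⟨⟨x, y⟩, hxy, -⟩, hx⟩ := p
    rw [mem_ker_cijFst] at hx
    simp only at hx
    simpa [hx] using hxy⟩
  invFun y := ⟨⟨(0, y), by simpa using (AddMonoidHom.mem_ker.mp y.2 : i * y = 0), 0, by simp⟩,
    rfl⟩
  left_inv := by
    rintro ⟨⟨⟨x, y⟩, _⟩, hx⟩
    rw [mem_ker_cijFst] at hx
    simp only at hx
    subst hx
    rfl
  right_inv _ := rfl

theorem Nat.card_cijSubgroup : Nat.card (cijSubgroup i j) = Nat.card R := by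
  rw [← (cijFst i j).card_ker_mul_card_range, Nat.card_congr (cijFstKerEquiv i j),
    range_cijFst, AddMonoidHom.card_ker_mul_card_range]

end

theorem Cij_ncard_general (d : ℕ) (i j : ZMod d) :
    (Cij i j).ncard = d := by
  rw [← Nat.card_coe_set_eq]
  exact (Nat.card_cijSubgroup i j).trans (Nat.card_zmod d)

/-- For `i ≠ 0`, the set `C_{i,j}` has exactly `d` elements. -/
theorem Cij_ncard (d : ℕ) (hd : 3 ≤ d) (i j : ZMod d) (hi : i ≠ 0) :
    (Cij i j).ncard = d :=
  Cij_ncard_general d i j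
end

section
/- For d ≥ 3 and (i,j) ∈ ℤ_d × ℤ_d with i ≠ 0, the set C_{i,j} := {(x,y) : iy − jx ≡ 0 (mod d), x ∈ iℤ_d} is pairwise commutative: for any (x₁,y₁),(x₂,y₂) ∈ C_{i,j}, x₁y₂ − x₂y₁ ≡ 0 (mod d). -/
theorem Cij_pairwise_comm_general (d : ℕ) (i j : ZMod d) :
    ∀ p ∈ Cij i j, ∀ q ∈ Cij i j, p.1 * q.2 - q.1 * p.2 = 0 := by
  rintro ⟨_, y₁⟩ ⟨h₁, k, rfl⟩ ⟨_, y₂⟩ ⟨h₂, l, rfl⟩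
  -- `(i k) y₂ = k (i y₂) = k j (i l)` and `(i l) y₁ = l (i y₁) = l j (i k)`.
  linear_combination k * h₂ - l * h₁

/-- For `i ≠ 0`, the set `C_{i,j}` is pairwise commutative. -/
theorem Cij_pairwise_comm (d : ℕ) (hd : 3 ≤ d) (i j : ZMod d) (hi : i ≠ 0) :
    ∀ p ∈ Cij i j, ∀ q ∈ Cij i j, p.1 * q.2 - q.1 * p.2 = 0 :=
  Cij_pairwise_comm_general d i j
end

section
/- For d ≥ 3 and (i,j) ∈ ℤ_d × ℤ_d with i ≠ 0, the set C_{i,j} := {(x,y) : iy − jx ≡ 0 (mod d), x ∈ iℤ_d} is a maximally commutative set: its elements pairwise commute, and any (s,t) ∈ ℤ_d × ℤ_d commuting with all elements of C_{i,j} lies in C_{i,j}. -/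
/-!
With `g = gcd(i, d)`, the annihilator of `i` in `ℤ_d` is generated by `d / g`, and an element
killing `d / g` is a multiple of `g`, hence of `i` since `g = i i⁻¹` (Bézout). So whatever kills
the annihilator of `i` lies in `iℤ_d`; the pairs `(0, y)` with `i y = 0` belong to `C_{i,j}`,
which gives the maximality.
-/

namespace ZMod

variable {n : ℕ} [NeZero n]

theorem mul_natCast_div_gcd_val_eq_zero (i : ZMod n) :
    i * ((n / i.val.gcd n : ℕ) : ZMod n) = 0 := by
  have key := Nat.mul_dvd_mul_right (Nat.gcd_dvd_left i.val n) (n / i.val.gcd n)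
  rw [Nat.mul_div_cancel' (Nat.gcd_dvd_right _ _)] at key
  nth_rw 1 [← natCast_zmod_val i]
  rwa [← Nat.cast_mul, natCast_eq_zero_iff]

theorem gcd_val_dvd_val_of_mul_eq_zero {i s : ZMod n}
    (hs : s * ((n / i.val.gcd n : ℕ) : ZMod n) = 0) : i.val.gcd n ∣ s.val := by
  have hg : i.val.gcd n ∣ n := Nat.gcd_dvd_right _ _
  have hn := Nat.pos_of_neZero n
  have hquot : 0 < n / i.val.gcd n :=
    Nat.div_pos (Nat.le_of_dvd hn hg) (Nat.gcd_pos_of_pos_right _ hn)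
  rw [← natCast_zmod_val s, ← Nat.cast_mul, natCast_eq_zero_iff] at hs
  refine Nat.dvd_of_mul_dvd_mul_right hquot ?_
  rwa [Nat.mul_div_cancel' hg]

theorem dvd_of_forall_mul_eq_zero {i s : ZMod n} (h : ∀ y, i * y = 0 → s * y = 0) :
    i ∣ s := by
  obtain ⟨m, hm⟩ := gcd_val_dvd_val_of_mul_eq_zero (h _ (mul_natCast_div_gcd_val_eq_zero i))
  refine ⟨i⁻¹ * m, ?_⟩
  rw [← mul_assoc, mul_inv_eq_gcd, ← Nat.cast_mul, ← hm, natCast_zmod_val]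

end ZMod

theorem Cij_commute {d : ℕ} {i j : ZMod d} {p q : ZMod d × ZMod d} (hp : p ∈ Cij i j)
    (hq : q ∈ Cij i j) : p.1 * q.2 - q.1 * p.2 = 0 := by
  obtain ⟨hp, k, hk⟩ := hp
  obtain ⟨hq, l, hl⟩ := hq
  rw [hk] at hp ⊢
  rw [hl] at hq ⊢
  linear_combination k * hq - l * hp

theorem mem_Cij_of_forall_commute {d : ℕ} [NeZero d] {i j s t : ZMod d}
    (h : ∀ p ∈ Cij i j, s * p.2 - p.1 * t = 0) : (s, t) ∈ Cij i j := by
  have hij : s * j - i * t = 0 := h (i, j) ⟨by ring, 1, by ring⟩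
  refine ⟨by linear_combination -hij, ZMod.dvd_of_forall_mul_eq_zero fun y hy => ?_⟩
  simpa using h (0, y) ⟨by simp [hy], 0, by simp⟩

theorem Cij_maxComm_general (d : ℕ) (hd : 3 ≤ d) (i j : ZMod d) :
    (∀ p ∈ Cij i j, ∀ q ∈ Cij i j, p.1 * q.2 - q.1 * p.2 = 0) ∧
    (∀ s t : ZMod d, (∀ p ∈ Cij i j, s * p.2 - p.1 * t = 0) → (s, t) ∈ Cij i j) := by
  have : NeZero d := ⟨by omega⟩
  exact ⟨fun _ hp _ hq => Cij_commute hp hq, fun _ _ => mem_Cij_of_forall_commute⟩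

/-- For `i ≠ 0`, the set `C_{i,j}` is maximally commutative: its elements pairwise
commute and any pair commuting with all of them lies in it. -/
theorem Cij_maxComm (d : ℕ) (hd : 3 ≤ d) (i j : ZMod d) (hi : i ≠ 0) :
    (∀ p ∈ Cij i j, ∀ q ∈ Cij i j, p.1 * q.2 - q.1 * p.2 = 0) ∧
    (∀ s t : ZMod d, (∀ p ∈ Cij i j, s * p.2 - p.1 * t = 0) → (s, t) ∈ Cij i j) :=
  Cij_maxComm_general d hd i j
end
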